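/- arXiv:1011.6238 — 2 statements merged into one kernel-verified Lean document; each statement's English description precedes it below -/
import Mathlib

section
/- For the smooth functions χ₁, χ₂ of the QHM frame and the element ξₙ of degree n obtained by extending χᵢ by the covariance relation, the seminorm p_{n₃,n₂,n₁}(ξₙ) := ‖∂₃^{n₃}∂₂^{n₂}∂₁^{n₁}(ξₙ)‖_∞ satisfies a bound p_{n₃,n₂,n₁}(ξₙ) ≤ C(1+|n|)^{n₃+2n₂} with a constant C independent of n; in particular, concretely: for a fixed smooth compactly supported χ : ℝ → ℂ and the function gₙ(x) = χ(x), ‖(d/dx)^{n₁}((−2πin)^{n₃}(−2πicn(x−nμ))^{n₂} gₙ)‖_{∞,[0,1]} grows at most polynomially in n of degree n₃ + 2n₂. -/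
open Finset in
lemma my_iteratedDeriv_sum {ι : Type*} (u : Finset ι) (f : ι → ℝ → ℂ) (m : ℕ)
    (h : ∀ j ∈ u, ContDiff ℝ (⊤ : ℕ∞) (f j)) (x : ℝ) :
    iteratedDeriv m (fun x => ∑ j ∈ u, f j x) x = ∑ j ∈ u, iteratedDeriv m (f j) x := by
  simp_rw [iteratedDeriv_eq_iteratedFDeriv]
  rw [iteratedFDeriv_sum (fun j hj => (h j hj).of_le (by exact_mod_cast le_top))]
  simp

lemma my_iteratedDeriv_const_mul (a : ℂ) (f : ℝ → ℂ) (m : ℕ) (h : ContDiff ℝ (⊤ : ℕ∞) f) (x : ℝ) :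
    iteratedDeriv m (fun x => a * f x) x = a * iteratedDeriv m f x := by
  rw [← iteratedDerivWithin_univ, ← iteratedDerivWithin_univ,
    show (fun x => a * f x) = a • f from by funext y; simp [smul_eq_mul],
    iteratedDerivWithin_const_smul (Set.mem_univ x) uniqueDiffOn_univ a
      ((h.of_le (by exact_mod_cast le_top)).contDiffOn.contDiffWithinAt (Set.mem_univ x))]
  simp



/-- growth estimate for the seminorms of the QHM frame elements:
for a fixed smooth compactly supported `χ : ℝ → ℂ`, the sup norm on `[0,1]` of
`(d/dx)^{n₁} ((−2πin)^{n₃} (−2πicn(x−nμ))^{n₂} χ(x))` is bounded by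
`C (1+|n|)^{n₃+2n₂}` with `C` independent of `n`; i.e.
`p_{n₃,n₂,n₁}(ξₙ) ≤ C (1+|n|)^{n₃+2n₂}`. -/
theorem qhm_seminorm_polynomial_growth
    (c : ℕ) (hc : 0 < c) (μ : ℝ)
    (χ : ℝ → ℂ) (hχ : ContDiff ℝ (⊤ : ℕ∞) χ) (hsupp : HasCompactSupport χ)
    (n₁ n₂ n₃ : ℕ) :
    ∃ C : ℝ, ∀ n : ℤ, ∀ x ∈ Set.Icc (0 : ℝ) 1,
      ‖iteratedDeriv n₁
          (fun x' : ℝ =>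
            (-(2 * Real.pi * Complex.I * n)) ^ n₃
              * (-(2 * Real.pi * Complex.I * c * n * ((x' : ℂ) - n * μ))) ^ n₂
              * χ x') x‖
        ≤ C * (1 + |(n : ℝ)|) ^ (n₃ + 2 * n₂) := by
  classical
  set ψ : ℕ → ℝ → ℂ := fun j x => (x : ℂ) ^ j * χ x with hψdef
  have hψ : ∀ j, ContDiff ℝ (⊤ : ℕ∞) (ψ j) := fun j =>
    (Complex.ofRealCLM.contDiff.pow j).mul hχ
  set M : ℕ → ℝ := fun j => sSup ((fun x => ‖iteratedDeriv n₁ (ψ j) x‖) '' Set.Icc 0 1) with hMdef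
  have hcont : ∀ j, Continuous fun x => ‖iteratedDeriv n₁ (ψ j) x‖ := fun j =>
    ((hψ j).continuous_iteratedDeriv n₁ (by exact_mod_cast le_top)).norm
  have hMub : ∀ j, ∀ x ∈ Set.Icc (0:ℝ) 1, ‖iteratedDeriv n₁ (ψ j) x‖ ≤ M j := by
    intro j x hx
    exact le_csSup (isCompact_Icc.bddAbove_image (hcont j).continuousOn)
      (Set.mem_image_of_mem _ hx)
  have hM0 : ∀ j, 0 ≤ M j := fun j =>
    le_trans (norm_nonneg _) (hMub j 0 (by norm_num))
  set K : ℕ → ℝ := fun j =>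
    (2 * Real.pi) ^ n₃ * (2 * Real.pi * c) ^ n₂ * (n₂.choose j) * |μ| ^ (n₂ - j) with hKdef
  have hK0 : ∀ j, 0 ≤ K j := by
    intro j
    have := Real.pi_pos
    positivity
  refine ⟨∑ j ∈ Finset.range (n₂ + 1), K j * M j, ?_⟩
  intro n x hx
  set A : ℕ → ℂ := fun j =>
    (-(2 * Real.pi * Complex.I * n)) ^ n₃ * (-(2 * Real.pi * Complex.I * c * n)) ^ n₂
      * (n₂.choose j) * (-(n * μ : ℂ)) ^ (n₂ - j) with hAdef
  have key : (fun x' : ℝ =>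
            (-(2 * Real.pi * Complex.I * n)) ^ n₃
              * (-(2 * Real.pi * Complex.I * c * n * ((x' : ℂ) - n * μ))) ^ n₂
              * χ x')
      = fun x' : ℝ => ∑ j ∈ Finset.range (n₂ + 1), A j * ψ j x' := by
    funext x'
    rw [show -(2 * Real.pi * Complex.I * c * n * ((x' : ℂ) - n * μ))
        = (-(2 * Real.pi * Complex.I * c * n)) * ((x' : ℂ) + -(n * μ : ℂ)) by ring,
      mul_pow, add_pow]
    simp only [hAdef, hψdef, Finset.mul_sum, Finset.sum_mul]
    exact Finset.sum_congr rfl fun j hj => by ring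
  rw [key, my_iteratedDeriv_sum _ _ _ (fun j _ => contDiff_const.mul (hψ j)) x]
  have hterm : ∀ j ∈ Finset.range (n₂ + 1),
      ‖A j * iteratedDeriv n₁ (fun x => A j * ψ j x) x‖ = 0 → True := fun _ _ _ => trivial
  have hrw : ∀ j, iteratedDeriv n₁ (fun x => A j * ψ j x) x = A j * iteratedDeriv n₁ (ψ j) x :=
    fun j => my_iteratedDeriv_const_mul (A j) (ψ j) n₁ (hψ j) x
  simp only [hrw]
  have hnormA : ∀ j, ‖A j‖ ≤ K j * (1 + |(n:ℝ)|) ^ (n₃ + 2 * n₂) := by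
    intro j
    have hpi := Real.pi_pos
    have h1 : ‖(-(2 * Real.pi * Complex.I * (n:ℂ)))‖ = 2 * Real.pi * |(n:ℝ)| := by
      simp [norm_mul, Complex.norm_real, abs_of_pos hpi]
    have h2 : ‖(-(2 * Real.pi * Complex.I * c * (n:ℂ)))‖ = 2 * Real.pi * c * |(n:ℝ)| := by
      simp [norm_mul, Complex.norm_real, abs_of_pos hpi]
    have h3 : ‖(-((n:ℂ) * μ))‖ = |(n:ℝ)| * |μ| := by
      simp [norm_mul, Complex.norm_real]
    have habs : |(n:ℝ)| ≤ 1 + |(n:ℝ)| := by linarith [abs_nonneg (n:ℝ)]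
    have h1le : 1 ≤ 1 + |(n:ℝ)| := by linarith [abs_nonneg (n:ℝ)]
    have hA : ‖A j‖ = (2 * Real.pi * |(n:ℝ)|) ^ n₃ * (2 * Real.pi * c * |(n:ℝ)|) ^ n₂
        * (n₂.choose j) * (|(n:ℝ)| * |μ|) ^ (n₂ - j) := by
      rw [hAdef]
      simp only [norm_mul, norm_pow, h1, h2, h3, Complex.norm_natCast]
    rw [hA]
    simp only [hKdef]
    have e1 : (2 * Real.pi * |(n:ℝ)|) ^ n₃ ≤ (2 * Real.pi) ^ n₃ * (1 + |(n:ℝ)|) ^ n₃ := by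
      rw [← mul_pow]
      exact pow_le_pow_left₀ (by positivity) (by nlinarith) _
    have e2 : (2 * Real.pi * c * |(n:ℝ)|) ^ n₂ ≤ (2 * Real.pi * c) ^ n₂ * (1 + |(n:ℝ)|) ^ n₂ := by
      rw [← mul_pow]
      have hcpos : (0:ℝ) < (c:ℝ) := by exact_mod_cast hc
      exact pow_le_pow_left₀ (by positivity) (by nlinarith) _
    have e3 : (|(n:ℝ)| * |μ|) ^ (n₂ - j) ≤ |μ| ^ (n₂ - j) * (1 + |(n:ℝ)|) ^ (n₂ - j) := by
      rw [← mul_pow]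
      exact pow_le_pow_left₀ (by positivity) (by nlinarith [abs_nonneg μ]) _
    have e4 : (1 + |(n:ℝ)|) ^ n₃ * (1 + |(n:ℝ)|) ^ n₂ * (1 + |(n:ℝ)|) ^ (n₂ - j)
        ≤ (1 + |(n:ℝ)|) ^ (n₃ + 2 * n₂) := by
      rw [← pow_add, ← pow_add]
      exact pow_le_pow_right₀ h1le (by omega)
    calc (2 * Real.pi * |(n:ℝ)|) ^ n₃ * (2 * Real.pi * c * |(n:ℝ)|) ^ n₂
        * (n₂.choose j) * (|(n:ℝ)| * |μ|) ^ (n₂ - j)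
        ≤ ((2 * Real.pi) ^ n₃ * (1 + |(n:ℝ)|) ^ n₃) * ((2 * Real.pi * c) ^ n₂ * (1 + |(n:ℝ)|) ^ n₂)
          * (n₂.choose j) * (|μ| ^ (n₂ - j) * (1 + |(n:ℝ)|) ^ (n₂ - j)) := by
          have := Real.pi_pos
          gcongr <;> positivity
      _ = ((2 * Real.pi) ^ n₃ * (2 * Real.pi * c) ^ n₂ * (n₂.choose j) * |μ| ^ (n₂ - j))
          * ((1 + |(n:ℝ)|) ^ n₃ * (1 + |(n:ℝ)|) ^ n₂ * (1 + |(n:ℝ)|) ^ (n₂ - j)) := by ring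
      _ ≤ ((2 * Real.pi) ^ n₃ * (2 * Real.pi * c) ^ n₂ * (n₂.choose j) * |μ| ^ (n₂ - j))
          * (1 + |(n:ℝ)|) ^ (n₃ + 2 * n₂) := by
          have := Real.pi_pos
          exact mul_le_mul_of_nonneg_left e4 (by positivity)
  have h1le : 1 ≤ 1 + |(n:ℝ)| := by linarith [abs_nonneg (n:ℝ)]
  calc ‖∑ j ∈ Finset.range (n₂ + 1), A j * iteratedDeriv n₁ (ψ j) x‖
      ≤ ∑ j ∈ Finset.range (n₂ + 1), ‖A j * iteratedDeriv n₁ (ψ j) x‖ := norm_sum_le _ _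
    _ ≤ ∑ j ∈ Finset.range (n₂ + 1), (K j * M j) * (1 + |(n:ℝ)|) ^ (n₃ + 2 * n₂) := by
        refine Finset.sum_le_sum fun j _ => ?_
        rw [norm_mul]
        calc ‖A j‖ * ‖iteratedDeriv n₁ (ψ j) x‖
            ≤ (K j * (1 + |(n:ℝ)|) ^ (n₃ + 2 * n₂)) * M j :=
              mul_le_mul (hnormA j) (hMub j x hx) (norm_nonneg _)
                (by positivity)
          _ = (K j * M j) * (1 + |(n:ℝ)|) ^ (n₃ + 2 * n₂) := by ring
    _ = (∑ j ∈ Finset.range (n₂ + 1), K j * M j) * (1 + |(n:ℝ)|) ^ (n₃ + 2 * n₂) := by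
        rw [Finset.sum_mul]
end

section
/- Let φ_t be the unital homomorphism family on the Toeplitz algebra determined by φ_t(S) = S(1−e)⊗1 + f(t)(e⊗S) + g(t)(Se⊗1), where f, g are smooth with f² + g² appropriate, f(0)=0, f(1)=1, g(0)=1, g(1)=0. Then φ₀(S) = S⊗1 and φ₁(S) = S²S̄⊗1 + e⊗S, and in each case φ_t(S) satisfies the Toeplitz relation φ_t(S̄)φ_t(S) = 1 where φ_t(S̄) = φ_t(S)* is given by the adjoint formula, provided f(t)² + g(t)² = 1. -/
open TensorProduct

/-- in `T ⊗ T` (two copies of the Toeplitz algebra, generated by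
`S, S̄` with `S̄S = 1`, `e = 1 − SS̄`), the family
`φ_t(S) = S(1−e)⊗1 + f(t)(e⊗S) + g(t)(Se⊗1)` satisfies `φ₀(S) = S⊗1`,
`φ₁(S) = S²S̄⊗1 + e⊗S`, and for each `t` with `f(t)² + g(t)² = 1` the Toeplitz
isometry relation `φ_t(S̄)·φ_t(S) = 1`, where
`φ_t(S̄) = (1−e)S̄⊗1 + f(t)(e⊗S̄) + g(t)(eS̄⊗1)` is the adjoint formula. -/
theorem toeplitz_diffotopy
    {T : Type*} [Ring T] [Algebra ℝ T]
    (S Sb : T) (h : Sb * S = 1)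
    (f g : ℝ → ℝ) (hf : ContDiff ℝ (⊤ : ℕ∞) f) (hg : ContDiff ℝ (⊤ : ℕ∞) g)
    (hf0 : f 0 = 0) (hf1 : f 1 = 1) (hg0 : g 0 = 1) (hg1 : g 1 = 0)
    (e : T) (he : e = 1 - S * Sb) :
    ((S * (1 - e)) ⊗ₜ[ℝ] (1 : T) + f 0 • (e ⊗ₜ[ℝ] S) + g 0 • ((S * e) ⊗ₜ[ℝ] (1 : T))
        = S ⊗ₜ[ℝ] (1 : T))
    ∧ ((S * (1 - e)) ⊗ₜ[ℝ] (1 : T) + f 1 • (e ⊗ₜ[ℝ] S) + g 1 • ((S * e) ⊗ₜ[ℝ] (1 : T))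
        = (S * S * Sb) ⊗ₜ[ℝ] (1 : T) + e ⊗ₜ[ℝ] S)
    ∧ ∀ t : ℝ, f t ^ 2 + g t ^ 2 = 1 →
      (((1 - e) * Sb) ⊗ₜ[ℝ] (1 : T) + f t • (e ⊗ₜ[ℝ] Sb) + g t • ((e * Sb) ⊗ₜ[ℝ] (1 : T)))
        * ((S * (1 - e)) ⊗ₜ[ℝ] (1 : T) + f t • (e ⊗ₜ[ℝ] S) + g t • ((S * e) ⊗ₜ[ℝ] (1 : T)))
        = (1 : T ⊗[ℝ] T) := by
  have hSe : e * S = 0 := by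
    rw [he, sub_mul, one_mul, mul_assoc, h, mul_one, sub_self]
  have hSbe : Sb * e = 0 := by
    rw [he, mul_sub, mul_one, ← mul_assoc, h, one_mul, sub_self]
  have he2 : e * e = e := by
    nth_rewrite 2 [he]
    rw [mul_sub, mul_one, ← mul_assoc, hSe, zero_mul, sub_zero]
  refine ⟨?_, ?_, ?_⟩
  · rw [hf0, hg0, zero_smul, add_zero, one_smul, ← TensorProduct.add_tmul]
    congr 1; noncomm_ring
  · rw [hf1, hg1, zero_smul, add_zero, one_smul]
    congr 2
    rw [he]; noncomm_ring
  · intro t ht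
    have hoe : e * (1 - e) = 0 := by rw [mul_sub, mul_one, he2, sub_self]
    have k1 : ((1 - e) * Sb) * (S * (1 - e)) = 1 - e := by
      have e1 : ((1 - e) * Sb) * (S * (1 - e)) = (1 - e) * ((Sb * S) * (1 - e)) := by
        noncomm_ring
      rw [e1, h, one_mul, sub_mul, one_mul, hoe, sub_zero]
    have k2 : ((1 - e) * Sb) * e = 0 := by rw [mul_assoc, hSbe, mul_zero]
    have k3 : ((1 - e) * Sb) * (S * e) = 0 := by
      have e1 : ((1 - e) * Sb) * (S * e) = (1 - e) * ((Sb * S) * e) := by noncomm_ring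
      rw [e1, h, one_mul, sub_mul, one_mul, he2, sub_self]
    have k4 : e * (S * (1 - e)) = 0 := by rw [← mul_assoc, hSe, zero_mul]
    have k5 : e * (S * e) = 0 := by rw [← mul_assoc, hSe, zero_mul]
    have k6 : (e * Sb) * (S * (1 - e)) = 0 := by
      have e1 : (e * Sb) * (S * (1 - e)) = e * ((Sb * S) * (1 - e)) := by noncomm_ring
      rw [e1, h, one_mul, hoe]
    have k7 : (e * Sb) * e = 0 := by rw [mul_assoc, hSbe, mul_zero]
    have k8 : (e * Sb) * (S * e) = e := by
      have e1 : (e * Sb) * (S * e) = e * ((Sb * S) * e) := by noncomm_ring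
      rw [e1, h, one_mul, he2]
    simp only [add_mul, mul_add, smul_mul_assoc, mul_smul_comm,
      Algebra.TensorProduct.tmul_mul_tmul, smul_smul, k1, k2, k3, k4, k5, k6, k7, k8, h, he2,
      one_mul, mul_one, TensorProduct.zero_tmul, smul_zero, add_zero, zero_add]
    have hc : f t * f t + g t * g t = 1 := by nlinarith [ht]
    rw [add_assoc, ← add_smul, hc, one_smul, ← TensorProduct.add_tmul, sub_add_cancel,
      Algebra.TensorProduct.one_def]
end
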